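/- arXiv:1801.10125 — 2 statements merged into one kernel-verified Lean document; each statement's English description precedes it below -/
import Mathlib

section
/- Let X be a non-negative real random variable such that limsup_{n→∞} n · P(X > n) > 0 (limsup over n ∈ ℕ). Then there exists a function f : [0, ∞) → [0, ∞) such that: (i) limsup_{n→∞} n · P(X > f(n)) is a finite strictly positive real number (limsup over n ∈ ℕ); and (ii) f(x) + y ≤ f(x + y) for all x, y ∈ [0, ∞). -/
/-!
Write `F t = P(X > t)` and take `f x = x + g ⌈x⌉₊` with `g` nondecreasing, which gives (ii).
The shift `g` is raised lazily: `g (n+1) = g n` unless `(n+1) F(n+1+g n) > 1`, in which case it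
jumps to a point where that product is at most `1`; hence `n F(n + g n) ≤ 1` for all `n`.
If `g` jumps infinitely often, then at each jump `n F(n + g n) ≥ n F(n+1+g n) > n/(n+1) ≥ 1/2`.
Otherwise `g ≤ m` eventually, and `n F(n + g n) ≥ (n+m) F(n+m) - m F(n+m)` inherits the
positive limsup of `n F(n)`, because `F → 0`.
-/

open MeasureTheory Filter Topology

section

variable {Ω : Type*} [MeasurableSpace Ω] (μ : Measure Ω) [IsFiniteMeasure μ] (X : Ω → ℝ)

lemma antitone_toReal_measure_lt : Antitone fun t : ℝ => (μ {ω | t < X ω}).toReal :=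
  fun _ _ hst => ENNReal.toReal_mono (measure_ne_top _ _)
    (measure_mono fun _ hω => lt_of_le_of_lt hst hω)

lemma tendsto_toReal_measure_lt_atTop (hX : Measurable X) :
    Tendsto (fun t : ℝ => (μ {ω | t < X ω}).toReal) atTop (𝓝 0) := by
  have hempty : (⋂ t : ℝ, {ω | t < X ω}) = ∅ :=
    Set.eq_empty_of_forall_notMem fun ω hω =>
      lt_irrefl (X ω) (Set.mem_iInter.1 hω (X ω))
  have h := tendsto_measure_iInter_atTop (μ := μ) (s := fun t : ℝ => {ω | t < X ω})
    (fun t => (hX measurableSet_Ioi).nullMeasurableSet)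
    (fun s t hst ω hω => lt_of_le_of_lt hst hω) ⟨0, measure_ne_top _ _⟩
  rw [hempty, measure_empty] at h
  exact (ENNReal.tendsto_toReal ENNReal.zero_ne_top).comp h

end

lemma exists_pos_frequently_lt_of_pos_limsup {u : ℕ → ℝ}
    (h : 0 < limsup (fun n => (u n : EReal)) atTop) :
    ∃ c : ℝ, 0 < c ∧ ∃ᶠ n in atTop, c < u n := by
  obtain ⟨c, hc0, hc⟩ := EReal.lt_iff_exists_real_btwn.1 h
  exact ⟨c, EReal.coe_pos.1 hc0,
    (frequently_lt_of_lt_limsup (by isBoundedDefault) hc).mono fun _ => EReal.coe_lt_coe_iff.1⟩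

lemma exists_limsup_eq_coe_pos {u : ℕ → ℝ} {B c : ℝ} (hB : ∀ n, u n ≤ B) (hc : 0 < c)
    (hfreq : ∃ᶠ n in atTop, c < u n) :
    ∃ L : ℝ, 0 < L ∧ limsup (fun n => (u n : EReal)) atTop = L := by
  set l := limsup (fun n => (u n : EReal)) atTop
  have hle : l ≤ B := limsup_le_of_le (by isBoundedDefault)
    (Eventually.of_forall fun n => EReal.coe_le_coe_iff.2 (hB n))
  have hge : (c : EReal) ≤ l := le_limsup_of_frequently_le
    (hfreq.mono fun _ h => EReal.coe_le_coe_iff.2 h.le) (by isBoundedDefault)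
  have hne_top : l ≠ ⊤ := ne_top_of_le_ne_top (EReal.coe_ne_top B) hle
  have hne_bot : l ≠ ⊥ := ne_bot_of_le_ne_bot (EReal.coe_ne_bot c) hge
  refine ⟨l.toReal, ?_, (EReal.coe_toReal hne_top hne_bot).symm⟩
  rw [← EReal.coe_toReal hne_top hne_bot, EReal.coe_le_coe_iff] at hge
  linarith

lemma half_lt_mul_of_one_lt_succ_mul {F : ℝ → ℝ} (hF : Antitone F) {n : ℕ} (hn : 1 ≤ n) {s : ℝ}
    (h : 1 < ((n + 1 : ℕ) : ℝ) * F ((n + 1 : ℕ) + s)) : 1 / 2 < n * F (n + s) := by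
  push_cast at h
  have hn' : (1 : ℝ) ≤ n := by exact_mod_cast hn
  have hmono : F (n + 1 + s) ≤ F (n + s) := hF (by linarith)
  have hpos : 0 < F (n + 1 + s) := by
    by_contra! h0
    nlinarith
  nlinarith

lemma frequently_lt_mul_of_eventually_le {F : ℝ → ℝ} (hF : Antitone F)
    (hF0 : Tendsto F atTop (𝓝 0)) {c : ℝ} (hc : 0 < c) (hfreq : ∃ᶠ n : ℕ in atTop, c < n * F n)
    {g : ℕ → ℝ} {m : ℕ} (hg : ∀ᶠ n in atTop, g n ≤ m) :
    ∃ᶠ n : ℕ in atTop, c / 2 < n * F (n + g n) := by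
  have hshift : ∃ᶠ k : ℕ in atTop, c < ((k + m : ℕ) : ℝ) * F (k + m : ℕ) := by
    rwa [← map_add_atTop_eq_nat m, frequently_map] at hfreq
  have hsmall : ∀ᶠ k : ℕ in atTop, m * F ((k + m : ℕ) : ℝ) < c / 2 := by
    have : Tendsto (fun k : ℕ => m * F ((k + m : ℕ) : ℝ)) atTop (𝓝 0) := by
      simpa using (hF0.comp (tendsto_natCast_atTop_atTop.comp
        (tendsto_add_atTop_nat m))).const_mul (m : ℝ)
    exact this.eventually_lt_const (half_pos hc)
  refine (hshift.and_eventually (hsmall.and hg)).mono fun k ⟨hk, hsm, hgk⟩ => ?_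
  push_cast at hk hsm
  have hle : F (k + m) ≤ F (k + g k) := hF (by linarith)
  nlinarith [Nat.cast_nonneg (α := ℝ) k]

noncomputable def lazyShift (F : ℝ → ℝ) (τ : ℕ → ℝ) : ℕ → ℝ
  | 0 => 0
  | n + 1 =>
    if ((n + 1 : ℕ) : ℝ) * F ((n + 1 : ℕ) + lazyShift F τ n) ≤ 1 then lazyShift F τ n
    else max (lazyShift F τ n) (τ (n + 1))

namespace lazyShift

variable {F : ℝ → ℝ} {τ : ℕ → ℝ}

lemma succ_of_mul_le_one {n : ℕ}
    (h : ((n + 1 : ℕ) : ℝ) * F ((n + 1 : ℕ) + lazyShift F τ n) ≤ 1) :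
    lazyShift F τ (n + 1) = lazyShift F τ n := by
  rw [lazyShift, if_pos h]

lemma monotone : Monotone (lazyShift F τ) := by
  refine monotone_nat_of_le_succ fun n => ?_
  rw [lazyShift]
  split_ifs
  exacts [le_rfl, le_max_left _ _]

lemma nonneg (n : ℕ) : 0 ≤ lazyShift F τ n :=
  lazyShift.monotone (Nat.zero_le n)

lemma mul_le_one (hF : Antitone F) (hτ : ∀ n : ℕ, n * F (τ n) ≤ 1) (n : ℕ) :
    n * F (n + lazyShift F τ n) ≤ 1 := by
  cases n with
  | zero => simp
  | succ n =>
    rw [lazyShift]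
    split_ifs with h
    · exact h
    · refine le_trans (mul_le_mul_of_nonneg_left (hF ?_) (Nat.cast_nonneg _)) (hτ (n + 1))
      have := le_max_right (lazyShift F τ n) (τ (n + 1))
      have : (0 : ℝ) ≤ (n + 1 : ℕ) := Nat.cast_nonneg _
      linarith

lemma exists_pos_frequently_lt_mul (hF : Antitone F) (hF0 : Tendsto F atTop (𝓝 0))
    {c : ℝ} (hc : 0 < c) (hfreq : ∃ᶠ n : ℕ in atTop, c < n * F n) :
    ∃ c' : ℝ, 0 < c' ∧ ∃ᶠ n : ℕ in atTop, c' < n * F (n + lazyShift F τ n) := by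
  by_cases hjump : ∃ᶠ n : ℕ in atTop,
      ¬ ((n + 1 : ℕ) : ℝ) * F ((n + 1 : ℕ) + lazyShift F τ n) ≤ 1
  · refine ⟨1 / 2, one_half_pos, (hjump.and_eventually (eventually_ge_atTop 1)).mono ?_⟩
    exact fun n ⟨h, hn⟩ => half_lt_mul_of_one_lt_succ_mul hF hn (not_le.1 h)
  · obtain ⟨N, hN⟩ := eventually_atTop.1 (not_frequently.1 hjump)
    have hconst : ∀ n ≥ N, lazyShift F τ n = lazyShift F τ N := by
      intro n hn
      induction n, hn using Nat.le_induction with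
      | base => rfl
      | succ n hn ih => rw [succ_of_mul_le_one (not_not.1 (hN n hn)), ih]
    have hbdd : ∀ᶠ n in atTop, lazyShift F τ n ≤ ⌈lazyShift F τ N⌉₊ :=
      eventually_atTop.2 ⟨N, fun n hn => (hconst n hn).symm ▸ Nat.le_ceil _⟩
    exact ⟨c / 2, half_pos hc, frequently_lt_mul_of_eventually_le hF hF0 hc hfreq hbdd⟩

end lazyShift

theorem stmt_8_general
    (Ω : Type) [MeasurableSpace Ω] (P : Measure Ω) [IsProbabilityMeasure P]
    (X : Ω → ℝ) (hXmeas : Measurable X)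
    (hls : 0 < Filter.limsup (fun n : ℕ =>
        (((n : ℝ) * (P {ω | (n : ℝ) < X ω}).toReal : ℝ) : EReal)) atTop) :
    ∃ f : ℝ → ℝ, (∀ x, 0 ≤ x → 0 ≤ f x) ∧
      -- (i) `limsup n · P(X > f(n))` is a finite strictly positive real number
      (∃ L : ℝ, 0 < L ∧
        Filter.limsup (fun n : ℕ =>
          (((n : ℝ) * (P {ω | f n < X ω}).toReal : ℝ) : EReal)) atTop = (L : EReal)) ∧
      -- (ii) superadditivity-type property
      (∀ x y : ℝ, 0 ≤ x → 0 ≤ y → f x + y ≤ f (x + y)) := by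
  set F : ℝ → ℝ := fun t => (P {ω | t < X ω}).toReal
  have hF : Antitone F := antitone_toReal_measure_lt P X
  have hF0 : Tendsto F atTop (𝓝 0) := tendsto_toReal_measure_lt_atTop P X hXmeas
  obtain ⟨c, hc, hfreq⟩ := exists_pos_frequently_lt_of_pos_limsup hls
  have hτ (n : ℕ) : ∃ t, n * F t ≤ 1 :=
    ((hF0.const_mul (n : ℝ)).eventually_lt_const (by simp)).exists.imp fun _ => le_of_lt
  choose τ hτ using hτ
  obtain ⟨c', hc', hfreq'⟩ := lazyShift.exists_pos_frequently_lt_mul (τ := τ) hF hF0 hc hfreq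
  refine ⟨fun x => x + lazyShift F τ ⌈x⌉₊, fun x hx => add_nonneg hx (lazyShift.nonneg _),
    ?_, fun x y _ hy => ?_⟩
  · simp only [Nat.ceil_natCast]
    exact exists_limsup_eq_coe_pos (lazyShift.mul_le_one hF hτ) hc' hfreq'
  · have : lazyShift F τ ⌈x⌉₊ ≤ lazyShift F τ ⌈x + y⌉₊ :=
      lazyShift.monotone (Nat.ceil_mono (le_add_of_nonneg_right hy))
    linarith

theorem stmt_8
    (Ω : Type) [MeasurableSpace Ω] (P : Measure Ω) [IsProbabilityMeasure P]
    (X : Ω → ℝ) (hXmeas : Measurable X) (hXpos : ∀ ω, 0 ≤ X ω)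
    (hls : 0 < Filter.limsup (fun n : ℕ =>
        (((n : ℝ) * (P {ω | (n : ℝ) < X ω}).toReal : ℝ) : EReal)) atTop) :
    ∃ f : ℝ → ℝ, (∀ x, 0 ≤ x → 0 ≤ f x) ∧
      -- (i) `limsup n · P(X > f(n))` is a finite strictly positive real number
      (∃ L : ℝ, 0 < L ∧
        Filter.limsup (fun n : ℕ =>
          (((n : ℝ) * (P {ω | f n < X ω}).toReal : ℝ) : EReal)) atTop = (L : EReal)) ∧
      -- (ii) superadditivity-type property
      (∀ x y : ℝ, 0 ≤ x → 0 ≤ y → f x + y ≤ f (x + y)) :=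
  stmt_8_general Ω P X hXmeas hls
end

section
/- Let P_n(z) be a polynomial of degree n in one complex variable with leading coefficient c ≠ 0. Then for every r > 0, the Lebesgue measure (on ℂ ≅ ℝ²) of the set { z ∈ ℂ : |P_n(z)| ≤ r^n } is at most π n r² |c|^{−2/n}. -/
open MeasureTheory Polynomial

/-!
Write `p = c ∏ (z - aᵢ)` over its `n` roots and put `R = r |c|^(-1/n)`, so that `|c| Rⁿ = rⁿ`.
If `|p(z)| ≤ rⁿ`, the nearest root `a` satisfies `|c| |z - a|ⁿ ≤ |p(z)| ≤ |c| Rⁿ`, hence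
`|z - a| ≤ R`. The sublevel set is thus covered by `n` discs of radius `R`, of total area
`π n R² = π n r² |c|^(-2/n)`.
-/

namespace Polynomial.Splits

variable {K : Type*} [NormedField K] {f : K[X]}

theorem norm_eval_eq (hf : f.Splits) (x : K) :
    ‖f.eval x‖ = ‖f.leadingCoeff‖ * (f.roots.map fun a ↦ ‖x - a‖).prod := by
  rw [hf.eval_eq_prod_roots, norm_mul, ← normHom_apply (_ : Multiset K).prod, map_multiset_prod,
    Multiset.map_map]
  rfl

theorem exists_mem_roots_norm_sub_le (hf : f.Splits) (hdeg : 0 < f.natDegree) {R : ℝ}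
    (hR : 0 ≤ R) {x : K} (hx : ‖f.eval x‖ ≤ ‖f.leadingCoeff‖ * R ^ f.natDegree) :
    ∃ a ∈ f.roots, ‖x - a‖ ≤ R := by
  have hlc : 0 < ‖f.leadingCoeff‖ :=
    norm_pos_iff.mpr (leadingCoeff_ne_zero.mpr (ne_zero_of_natDegree_gt hdeg))
  have hcard : f.roots.card = f.natDegree := hf.natDegree_eq_card_roots.symm
  have hne : f.roots ≠ 0 := by
    rw [← Multiset.card_pos, hcard]
    exact hdeg
  obtain ⟨a, ha, hmin⟩ := Multiset.exists_min_image (fun a ↦ ‖x - a‖) hne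
  refine ⟨a, ha, ?_⟩
  have hprod : ‖x - a‖ ^ f.natDegree ≤ (f.roots.map fun b ↦ ‖x - b‖).prod := by
    rw [← hcard, ← Multiset.prod_replicate, ← Multiset.map_const']
    exact Multiset.prod_map_le_prod_map₀ _ _ (fun _ _ ↦ norm_nonneg _) hmin
  have hpow : ‖x - a‖ ^ f.natDegree ≤ R ^ f.natDegree := by
    refine le_of_mul_le_mul_left ?_ hlc
    calc ‖f.leadingCoeff‖ * ‖x - a‖ ^ f.natDegree
        ≤ ‖f.leadingCoeff‖ * (f.roots.map fun b ↦ ‖x - b‖).prod := by gcongr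
      _ = ‖f.eval x‖ := (hf.norm_eval_eq x).symm
      _ ≤ ‖f.leadingCoeff‖ * R ^ f.natDegree := hx
  exact (pow_le_pow_iff_left₀ (norm_nonneg _) hR hdeg.ne').mp hpow

theorem setOf_norm_eval_le_subset_biUnion_closedBall [DecidableEq K] (hf : f.Splits)
    (hdeg : 0 < f.natDegree) {R : ℝ} (hR : 0 ≤ R) :
    {x | ‖f.eval x‖ ≤ ‖f.leadingCoeff‖ * R ^ f.natDegree} ⊆
      ⋃ a ∈ f.roots.toFinset, Metric.closedBall a R := by
  intro x hx
  obtain ⟨a, ha, hxa⟩ := hf.exists_mem_roots_norm_sub_le hdeg hR hx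
  exact Set.mem_biUnion (Multiset.mem_toFinset.mpr ha)
    (by rwa [Metric.mem_closedBall, dist_eq_norm])

end Polynomial.Splits

theorem Complex.volume_setOf_norm_eval_le (p : ℂ[X]) (hdeg : 0 < p.natDegree) {R : ℝ}
    (hR : 0 ≤ R) :
    volume {z | ‖p.eval z‖ ≤ ‖p.leadingCoeff‖ * R ^ p.natDegree} ≤
      ENNReal.ofReal (Real.pi * p.natDegree * R ^ 2) := by
  have hsplit : p.Splits := IsAlgClosed.splits p
  calc volume {z | ‖p.eval z‖ ≤ ‖p.leadingCoeff‖ * R ^ p.natDegree}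
      ≤ volume (⋃ a ∈ p.roots.toFinset, Metric.closedBall a R) :=
        measure_mono (hsplit.setOf_norm_eval_le_subset_biUnion_closedBall hdeg hR)
    _ ≤ ∑ a ∈ p.roots.toFinset, volume (Metric.closedBall a R) := measure_biUnion_finset_le _ _
    _ = p.roots.toFinset.card * (ENNReal.ofReal R ^ 2 * NNReal.pi) := by
        simp only [Complex.volume_closedBall, Finset.sum_const, nsmul_eq_mul]
    _ ≤ p.natDegree * (ENNReal.ofReal R ^ 2 * NNReal.pi) := by
        gcongr
        exact (Multiset.toFinset_card_le _).trans hsplit.natDegree_eq_card_roots.ge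
    _ = ENNReal.ofReal (Real.pi * p.natDegree * R ^ 2) := by
        rw [ENNReal.ofReal_mul (by positivity), ENNReal.ofReal_mul Real.pi_pos.le,
          ENNReal.ofReal_natCast, ENNReal.ofReal_pow hR, ← NNReal.coe_real_pi,
          ENNReal.ofReal_coe_nnreal]
        ring

theorem stmt_11_general
    (p : Polynomial ℂ) (n : ℕ) (hn : 0 < n) (hdeg : p.natDegree = n)
    (c : ℂ) (hlead : p.leadingCoeff = c) (r : ℝ) (hr : 0 < r) :
    volume {z : ℂ | ‖p.eval z‖ ≤ r ^ n} ≤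
      ENNReal.ofReal (Real.pi * n * r ^ 2 * ‖c‖ ^ (-(2 / (n : ℝ)))) := by
  subst hdeg hlead
  have hc : 0 < ‖p.leadingCoeff‖ :=
    norm_pos_iff.mpr (leadingCoeff_ne_zero.mpr (ne_zero_of_natDegree_gt hn))
  set R := r * ‖p.leadingCoeff‖ ^ (-(1 / (p.natDegree : ℝ)))
  have hR : 0 < R := by positivity
  have hRn : ‖p.leadingCoeff‖ * R ^ p.natDegree = r ^ p.natDegree := by
    rw [mul_pow, ← Real.rpow_natCast (_ ^ _), ← Real.rpow_mul hc.le,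
      neg_mul, one_div_mul_cancel (by exact_mod_cast hn.ne'), Real.rpow_neg_one]
    field_simp
  have hR2 : R ^ 2 = r ^ 2 * ‖p.leadingCoeff‖ ^ (-(2 / (p.natDegree : ℝ))) := by
    rw [mul_pow, ← Real.rpow_natCast (_ ^ _), ← Real.rpow_mul hc.le]
    push_cast
    ring_nf
  simpa only [hRn, hR2, mul_assoc] using Complex.volume_setOf_norm_eval_le p hn hR.le

theorem stmt_11
    (p : Polynomial ℂ) (n : ℕ) (hn : 0 < n) (hdeg : p.natDegree = n)
    (c : ℂ) (hlead : p.leadingCoeff = c) (hc : c ≠ 0) (r : ℝ) (hr : 0 < r) :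
    volume {z : ℂ | ‖p.eval z‖ ≤ r ^ n} ≤
      ENNReal.ofReal (Real.pi * n * r ^ 2 * ‖c‖ ^ (-(2 / (n : ℝ)))) :=
  stmt_11_general p n hn hdeg c hlead r hr
end
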